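/- Let R = σ_{S1}² v₁v₁' + σ_{S2}² v₂v₂' + σ² I where v₁, v₂ ∈ ℂⁿ are linearly independent and σ_{S1}², σ_{S2}² > 0. Then the two largest eigenvalues of R are λ_{1,2} = σ² + (σ_{S1}²‖v₁‖² + σ_{S2}²‖v₂‖²)/2 ± (1/2)√((σ_{S1}²‖v₁‖² − σ_{S2}²‖v₂‖²)² + 4σ_{S1}²σ_{S2}²|⟨v₁,v₂⟩|²), and all other eigenvalues equal σ². -/

import Mathlib

/-!
The signal part of `R` is `U V` with `U` the `n × 2` matrix with columns `v₁, v₂` and `V` the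
`2 × n` matrix with rows `σS1 v₁*, σS2 v₂*`. Sylvester's identity `X ^ 2 χ(U V) = X ^ n χ(V U)`
turns the characteristic polynomial of `R` into `(X - σ2) ^ (n - 2)` times that of the weighted
Gram matrix `V U`, shifted by `σ2`. That `2 × 2` matrix has trace `σS1 ‖v₁‖² + σS2 ‖v₂‖²` and
determinant `σS1 σS2 (‖v₁‖² ‖v₂‖² - |⟨v₁, v₂⟩|²)`, so its eigenvalues are `lam1 - σ2` and
`lam2 - σ2`. As `R` is Hermitian, its eigenvalues are the roots of its characteristic polynomial.
-/

open Matrix Polynomial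

section CommRing

variable {m n R : Type*} [CommRing R]

theorem Matrix.sum_vecMulVec_eq_transpose_mul [Fintype m] (u w : m → n → R) :
    ∑ k, vecMulVec (u k) (w k) = (of u)ᵀ * of w := by
  ext i j
  simp [mul_apply, vecMulVec_apply, Matrix.sum_apply]

theorem Matrix.charpoly_sum_vecMulVec [Fintype m] [Fintype n] [DecidableEq m] [DecidableEq n]
    (u w : m → n → R) (hmn : Fintype.card m ≤ Fintype.card n) :
    (∑ k, vecMulVec (u k) (w k)).charpoly
      = X ^ (Fintype.card n - Fintype.card m) * (of fun k l => w k ⬝ᵥ u l).charpoly := by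
  rw [sum_vecMulVec_eq_transpose_mul, charpoly_mul_comm_of_le _ _ hmn]
  rfl

theorem Matrix.charpoly_add_smul_one [Fintype n] [DecidableEq n] (M : Matrix n n R) (c : R) :
    (M + c • 1).charpoly = M.charpoly.comp (X - C c) := by
  simpa [sub_eq_add_neg, smul_one_eq_diagonal] using charpoly_sub_scalar M (-c)

theorem Matrix.charpoly_fin_two_eq_of_trace_of_det [Nontrivial R] {M : Matrix (Fin 2) (Fin 2) R}
    {μ₁ μ₂ : R} (htr : M.trace = μ₁ + μ₂) (hdet : M.det = μ₁ * μ₂) :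
    M.charpoly = (X - C μ₁) * (X - C μ₂) := by
  rw [charpoly_fin_two, htr, hdet, C_add, C_mul]
  ring

end CommRing

theorem Matrix.charpoly_smul_vecMulVec_add_smul_vecMulVec {𝕜 ι : Type*} [RCLike 𝕜] [Fintype ι]
    [DecidableEq ι] (hι : 2 ≤ Fintype.card ι) (v₁ v₂ : EuclideanSpace 𝕜 ι) (s₁ s₂ : 𝕜) :
    (s₁ • vecMulVec v₁ (star v₁) + s₂ • vecMulVec v₂ (star v₂)).charpoly
      = X ^ (Fintype.card ι - 2) * !![s₁ * inner 𝕜 v₁ v₁, s₁ * inner 𝕜 v₁ v₂;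
          s₂ * inner 𝕜 v₂ v₁, s₂ * inner 𝕜 v₂ v₂].charpoly := by
  have hsum : s₁ • vecMulVec v₁ (star v₁) + s₂ • vecMulVec v₂ (star v₂)
      = ∑ k, vecMulVec (![v₁.ofLp, v₂.ofLp] k) (![s₁ • star v₁.ofLp, s₂ • star v₂.ofLp] k) := by
    simp [Fin.sum_univ_two, vecMulVec_smul]
  rw [hsum, charpoly_sum_vecMulVec _ _ (by simpa using hι), Fintype.card_fin]
  congr 2
  ext k l
  fin_cases k <;> fin_cases l <;>
    simp [EuclideanSpace.inner_eq_star_dotProduct, dotProduct_comm, -inner_self_eq_norm_sq_to_K]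

theorem Real.quadratic_roots_mul {a d p : ℝ} (h : 0 ≤ (a - d) ^ 2 + 4 * p) :
    ((a + d) / 2 + √((a - d) ^ 2 + 4 * p) / 2) * ((a + d) / 2 - √((a - d) ^ 2 + 4 * p) / 2)
      = a * d - p := by
  linear_combination (-1 / 4 : ℝ) * Real.sq_sqrt h

theorem charpoly_two_signal_model {n : ℕ} (hn : 2 ≤ n) (v₁ v₂ : EuclideanSpace ℂ (Fin n))
    {s₁ s₂ μ₁ μ₂ : ℝ} (σ2 : ℝ) (hsum : μ₁ + μ₂ = s₁ * ‖v₁‖ ^ 2 + s₂ * ‖v₂‖ ^ 2)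
    (hprod : μ₁ * μ₂ = s₁ * ‖v₁‖ ^ 2 * (s₂ * ‖v₂‖ ^ 2) - s₁ * s₂ * ‖(inner ℂ v₁ v₂ : ℂ)‖ ^ 2) :
    ((s₁ : ℂ) • vecMulVec v₁ (star v₁) + (s₂ : ℂ) • vecMulVec v₂ (star v₂)
        + (σ2 : ℂ) • (1 : Matrix (Fin n) (Fin n) ℂ)).charpoly
      = (X - C (σ2 : ℂ)) ^ (n - 2) * ((X - C (σ2 + μ₁ : ℂ)) * (X - C (σ2 + μ₂ : ℂ))) := by
  have hc : inner ℂ v₁ v₂ * inner ℂ v₂ v₁ = (‖(inner ℂ v₁ v₂ : ℂ)‖ : ℂ) ^ 2 := by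
    rw [← inner_conj_symm v₂ v₁, Complex.mul_conj']
  rw [charpoly_add_smul_one, charpoly_smul_vecMulVec_add_smul_vecMulVec (by simpa),
    Fintype.card_fin, charpoly_fin_two_eq_of_trace_of_det (μ₁ := (μ₁ : ℂ)) (μ₂ := (μ₂ : ℂ))]
  · simp only [mul_comp, pow_comp, X_comp, sub_comp, C_comp, sub_sub, C_add]
  · simp only [inner_self_eq_norm_sq_to_K, Complex.coe_algebraMap, trace_fin_two_of]
    exact_mod_cast hsum.symm
  · simp only [inner_self_eq_norm_sq_to_K, Complex.coe_algebraMap, det_fin_two_of]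
    have hprodC := congrArg Complex.ofReal hprod
    push_cast at hprodC
    linear_combination (-(s₁ : ℂ) * s₂) * hc - hprodC

theorem eigenvalues_two_signal_model_general
    (n : ℕ) (hn : 2 ≤ n)
    (v₁ v₂ : EuclideanSpace ℂ (Fin n))
    (σS1 σS2 σ2 : ℝ) (hS1 : 0 < σS1) (hS2 : 0 < σS2)
    (R : Matrix (Fin n) (Fin n) ℂ)
    (hReq : R = (σS1 : ℂ) • vecMulVec v₁ (star v₁) + (σS2 : ℂ) • vecMulVec v₂ (star v₂)
        + (σ2 : ℂ) • (1 : Matrix (Fin n) (Fin n) ℂ))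
    (hR : R.IsHermitian)
    (lam1 lam2 : ℝ)
    (h1 : lam1 = σ2 + (σS1 * ‖v₁‖ ^ 2 + σS2 * ‖v₂‖ ^ 2) / 2
        + Real.sqrt ((σS1 * ‖v₁‖ ^ 2 - σS2 * ‖v₂‖ ^ 2) ^ 2
            + 4 * σS1 * σS2 * ‖(inner ℂ v₁ v₂ : ℂ)‖ ^ 2) / 2)
    (h2 : lam2 = σ2 + (σS1 * ‖v₁‖ ^ 2 + σS2 * ‖v₂‖ ^ 2) / 2
        - Real.sqrt ((σS1 * ‖v₁‖ ^ 2 - σS2 * ‖v₂‖ ^ 2) ^ 2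
            + 4 * σS1 * σS2 * ‖(inner ℂ v₁ v₂ : ℂ)‖ ^ 2) / 2) :
    Finset.univ.val.map hR.eigenvalues
      = lam1 ::ₘ lam2 ::ₘ Multiset.replicate (n - 2) σ2 := by
  set c : ℂ := inner ℂ v₁ v₂
  rw [show 4 * σS1 * σS2 * ‖c‖ ^ 2 = 4 * (σS1 * σS2 * ‖c‖ ^ 2) by ring] at h1 h2
  have hsum : (lam1 - σ2) + (lam2 - σ2) = σS1 * ‖v₁‖ ^ 2 + σS2 * ‖v₂‖ ^ 2 := by
    rw [h1, h2]; ring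
  have hprod : (lam1 - σ2) * (lam2 - σ2)
      = σS1 * ‖v₁‖ ^ 2 * (σS2 * ‖v₂‖ ^ 2) - σS1 * σS2 * ‖c‖ ^ 2 := by
    rw [← Real.quadratic_roots_mul (by positivity), h1, h2]; ring
  set L := lam1 ::ₘ lam2 ::ₘ Multiset.replicate (n - 2) σ2
  have hchar : R.charpoly = ((L.map Complex.ofReal).map fun z => X - C z).prod := by
    rw [hReq, charpoly_two_signal_model hn v₁ v₂ σ2 hsum hprod]
    simp only [L, Complex.ofReal_sub, add_sub_cancel, Multiset.map_cons, Multiset.map_replicate,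
      Multiset.prod_cons, Multiset.prod_replicate]
    ring
  apply Multiset.map_injective Complex.ofReal_injective
  rw [Multiset.map_map, ← roots_multiset_prod_X_sub_C (L.map Complex.ofReal), ← hchar]
  exact hR.roots_charpoly_eq_eigenvalues.symm

theorem eigenvalues_two_signal_model
    (n : ℕ) (hn : 2 ≤ n)
    (v₁ v₂ : EuclideanSpace ℂ (Fin n))
    (hLI : LinearIndependent ℂ ![v₁, v₂])
    (σS1 σS2 σ2 : ℝ) (hS1 : 0 < σS1) (hS2 : 0 < σS2) (hσ : 0 < σ2)
    (R : Matrix (Fin n) (Fin n) ℂ)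
    (hReq : R = (σS1 : ℂ) • vecMulVec v₁ (star v₁) + (σS2 : ℂ) • vecMulVec v₂ (star v₂)
        + (σ2 : ℂ) • (1 : Matrix (Fin n) (Fin n) ℂ))
    (hR : R.IsHermitian)
    (lam1 lam2 : ℝ)
    (h1 : lam1 = σ2 + (σS1 * ‖v₁‖ ^ 2 + σS2 * ‖v₂‖ ^ 2) / 2
        + Real.sqrt ((σS1 * ‖v₁‖ ^ 2 - σS2 * ‖v₂‖ ^ 2) ^ 2
            + 4 * σS1 * σS2 * ‖(inner ℂ v₁ v₂ : ℂ)‖ ^ 2) / 2)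
    (h2 : lam2 = σ2 + (σS1 * ‖v₁‖ ^ 2 + σS2 * ‖v₂‖ ^ 2) / 2
        - Real.sqrt ((σS1 * ‖v₁‖ ^ 2 - σS2 * ‖v₂‖ ^ 2) ^ 2
            + 4 * σS1 * σS2 * ‖(inner ℂ v₁ v₂ : ℂ)‖ ^ 2) / 2) :
    Finset.univ.val.map hR.eigenvalues
      = lam1 ::ₘ lam2 ::ₘ Multiset.replicate (n - 2) σ2 :=
  eigenvalues_two_signal_model_general n hn v₁ v₂ σS1 σS2 σ2 hS1 hS2 R hReq hR lam1 lam2 h1 h2
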